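/- Let (L, Δ, S) be a locality and H a subgroup of L. Then there exists P ∈ Δ such that H ≤ N_L(P); that is, every subgroup of a locality is contained in the normalizer of some object. -/

import Mathlib

universe u

structure PartialGroupOn (L : Type u) : Type u where
  nonempty : Nonempty L
  D : Set (List L)
  Pi : List L → L
  inv : L → L
  mem_single : ∀ x : L, [x] ∈ D
  mem_append_left : ∀ u v : List L, u ++ v ∈ D → u ∈ D
  mem_append_right : ∀ u v : List L, u ++ v ∈ D → v ∈ D
  Pi_single : ∀ x : L, Pi [x] = x
  mem_assoc : ∀ u v w : List L, u ++ v ++ w ∈ D → u ++ [Pi v] ++ w ∈ D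
  Pi_assoc : ∀ u v w : List L, u ++ v ++ w ∈ D →
    Pi (u ++ v ++ w) = Pi (u ++ [Pi v] ++ w)
  inv_inv : ∀ x : L, inv (inv x) = x
  mem_inv : ∀ w ∈ D, (w.reverse.map inv) ++ w ∈ D
  Pi_inv : ∀ w ∈ D, Pi ((w.reverse.map inv) ++ w) = Pi []

namespace PartialGroupOn

variable {L : Type u} (M : PartialGroupOn L)

/-- The inverse of a word: reverse the word and invert each entry. -/
def wordInv (w : List L) : List L := w.reverse.map M.inv

/-- The identity element `1 = Π(∅)`. -/
def one : L := M.Pi []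

/-- Conjugation `x ↦ x^g = Π(g⁻¹, x, g)`. -/
def conj (x g : L) : L := M.Pi [M.inv g, x, g]

/-- `D(g)` is the set of `x` for which `x^g` is defined. -/
def Dg (g : L) : Set L := {x | [M.inv g, x, g] ∈ M.D}

/-- A partial subgroup: a nonempty subset closed under inversion and under the
product applied to words in `D` with entries in the subset. -/
def IsPartialSubgroup (H : Set L) : Prop :=
  H.Nonempty ∧ (∀ x ∈ H, M.inv x ∈ H) ∧
    ∀ w : List L, (∀ x ∈ w, x ∈ H) → w ∈ M.D → M.Pi w ∈ H

/-- A partial normal subgroup of `L`. -/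
def IsPartialNormal (N : Set L) : Prop :=
  M.IsPartialSubgroup N ∧
    ∀ x ∈ N, ∀ g : L, [M.inv g, x, g] ∈ M.D → M.conj x g ∈ N

/-- A subgroup of `L`: a partial subgroup `H` with `W(H) ⊆ D`. -/
def IsSubgroup (H : Set L) : Prop :=
  M.IsPartialSubgroup H ∧ ∀ w : List L, (∀ x ∈ w, x ∈ H) → w ∈ M.D

/-- `X ⊆ D(g)`, i.e. `X^g` is defined. -/
def setConjDef (X : Set L) (g : L) : Prop := ∀ x ∈ X, [M.inv g, x, g] ∈ M.D

/-- The conjugate set `X^g`. -/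
def setConj (X : Set L) (g : L) : Set L := {y | ∃ x ∈ X, y = M.conj x g}

/-- `viaChain Δ w X` says that `w = (g₁,…,gₙ)` is in `D` via the chain
`X = X₀, X₁ = X₀^{g₁}, …` of members of `Δ`. -/
def viaChain (Δ : Set (Set L)) : List L → Set L → Prop
  | [], X => X ∈ Δ
  | g :: w, X => X ∈ Δ ∧ M.setConjDef X g ∧ viaChain Δ w (M.setConj X g)

/-- `(L, Δ)` is an objective partial group: every member of `Δ` is a subgroup,
(O1) `D = D_Δ`, and (O2) the overgroup-closure condition. -/
def Objective (Δ : Set (Set L)) : Prop :=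
  (∀ X ∈ Δ, M.IsSubgroup X) ∧
  (M.D = {w | ∃ X : Set L, M.viaChain Δ w X}) ∧
  (∀ X ∈ Δ, ∀ Y ∈ Δ, ∀ g : L, M.setConjDef X g → M.IsSubgroup (M.setConj X g) →
    M.setConj X g ⊆ Y →
    ∀ Z : Set L, M.IsSubgroup Z → M.setConj X g ⊆ Z → Z ⊆ Y → Z ∈ Δ)

/-- The normalizer `N_L(X) = {g : X^g = X}`. -/
def normalizer (X : Set L) : Set L := {g | M.setConjDef X g ∧ M.setConj X g = X}

/-- `S_g = {x ∈ D(g) ∩ S : x^g ∈ S}`. -/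
def Sg (S : Set L) (g : L) : Set L :=
  {x | x ∈ S ∧ [M.inv g, x, g] ∈ M.D ∧ M.conj x g ∈ S}

/-- `S_w`: the set of `x ∈ S` successively conjugated into `S` by the entries
of the word `w`. -/
def Sw (S : Set L) : List L → Set L
  | [] => S
  | g :: w => {x | x ∈ S ∧ [M.inv g, x, g] ∈ M.D ∧ M.conj x g ∈ Sw S w}

/-- A `p`-subgroup: a subgroup whose cardinality is a power of `p`. -/
def IsPSubgroup (p : ℕ) (H : Set L) : Prop :=
  M.IsSubgroup H ∧ ∃ n : ℕ, Nat.card H = p ^ n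

/-- `(L, Δ, S)` is a locality. -/
def IsLocality (p : ℕ) (Δ : Set (Set L)) (S : Set L) : Prop :=
  p.Prime ∧ Finite L ∧ S ∈ Δ ∧ (∀ X ∈ Δ, X ⊆ S) ∧ M.Objective Δ ∧
    M.IsPSubgroup p S ∧
    ∀ H : Set L, M.IsPSubgroup p H → S ⊆ H → H = S

/-- The product set `XY` of two subsets of `L`. -/
def setProd (X Y : Set L) : Set L :=
  {z | ∃ a ∈ X, ∃ b ∈ Y, [a, b] ∈ M.D ∧ z = M.Pi [a, b]}

/-- A homomorphism of partial groups. -/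
def IsHom {L' : Type u} (M' : PartialGroupOn L') (β : L → L') : Prop :=
  (∀ w ∈ M.D, w.map β ∈ M'.D) ∧ ∀ w ∈ M.D, β (M.Pi w) = M'.Pi (w.map β)

end PartialGroupOn

open PartialGroupOn

variable {L : Type u}

/-!
Listing `H` as the word `(h₁, h₁⁻¹, h₂, h₂⁻¹, …)` gives an element of `W(H) ⊆ D`, so by (O1) it
lies in `D` via some object `P`; going back and forth along the chain shows that every `P^h`,
`h ∈ H`, is defined and is an object. Let `Q ≤ S` be the set of products of elements of the
objects `P^h`. It is a subgroup containing `P`, hence an object by (O2). For `k ∈ H`,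
conjugation by `k` sends `P^h` onto `P^{hk}`; it is defined on `Q` and multiplicative there
because the conjugates of `P` by products of elements of `S_H = ⋂_{h ∈ H} S_h` still have all
their `H`-conjugates in `Δ`, which provides the chains of objects witnessing that the words
`(k⁻¹, x, k)` and `(k⁻¹, x, k, k⁻¹, y, k)` lie in `D`. Hence `H ≤ N_L(Q)`.
-/

namespace PartialGroupOn

section Algebra

variable (M : PartialGroupOn L)

@[simp] lemma Pi_nil : M.Pi [] = M.one := rfl

lemma nil_mem_D : ([] : List L) ∈ M.D :=
  M.nonempty.elim fun x => M.mem_append_left [] [x] (M.mem_single x)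

lemma contract_mem {u v w : List L} (h : u ++ v ++ w ∈ M.D) : u ++ M.Pi v :: w ∈ M.D := by
  simpa using M.mem_assoc u v w h

lemma Pi_contract {u v w : List L} (h : u ++ v ++ w ∈ M.D) :
    M.Pi (u ++ v ++ w) = M.Pi (u ++ M.Pi v :: w) := by
  simpa using M.Pi_assoc u v w h

lemma insert_one_mem {u v : List L} (h : u ++ v ∈ M.D) : u ++ M.one :: v ∈ M.D :=
  M.contract_mem (v := []) (by simpa using h)

lemma Pi_insert_one {u v : List L} (h : u ++ v ∈ M.D) : M.Pi (u ++ M.one :: v) = M.Pi (u ++ v) :=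
  (M.Pi_contract (v := []) (by simpa using h)).symm.trans (by simp)

lemma one_mul (a : L) : M.Pi [M.one, a] = a := by
  simpa [M.Pi_single] using M.Pi_insert_one (u := []) (v := [a]) (M.mem_single a)

lemma mul_one (a : L) : M.Pi [a, M.one] = a := by
  simpa [M.Pi_single] using M.Pi_insert_one (u := [a]) (v := []) (by simpa using M.mem_single a)

lemma pair_mem_of_append_mem {u v : List L} (h : u ++ v ∈ M.D) : [M.Pi u, M.Pi v] ∈ M.D := by
  have h₁ : M.Pi u :: v ∈ M.D := M.contract_mem (u := []) (by simpa using h)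
  simpa using M.contract_mem (u := [M.Pi u]) (w := []) (by simpa using h₁)

lemma Pi_append {u v : List L} (h : u ++ v ∈ M.D) : M.Pi (u ++ v) = M.Pi [M.Pi u, M.Pi v] := by
  have h₁ : M.Pi u :: v ∈ M.D := M.contract_mem (u := []) (by simpa using h)
  calc M.Pi (u ++ v) = M.Pi (M.Pi u :: v) := by
        simpa using M.Pi_contract (u := []) (by simpa using h)
    _ = M.Pi [M.Pi u, M.Pi v] := by
      simpa using M.Pi_contract (u := [M.Pi u]) (w := []) (by simpa using h₁)

lemma Pi_cons {x : L} {u : List L} (h : x :: u ∈ M.D) : M.Pi (x :: u) = M.Pi [x, M.Pi u] := by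
  simpa [M.Pi_single] using M.Pi_append (u := [x]) h

lemma wordInv_wordInv (w : List L) : M.wordInv (M.wordInv w) = w := by
  simp [wordInv, List.map_reverse, Function.comp_def, M.inv_inv]

lemma wordInv_append_mem {w : List L} (h : w ∈ M.D) : M.wordInv w ++ w ∈ M.D :=
  M.mem_inv w h

lemma append_wordInv_mem {w : List L} (h : w ∈ M.D) : w ++ M.wordInv w ∈ M.D := by
  have := M.wordInv_append_mem (M.mem_append_left _ _ (M.wordInv_append_mem h))
  rwa [M.wordInv_wordInv] at this

lemma inv_mul_mem (a : L) : [M.inv a, a] ∈ M.D := M.mem_inv [a] (M.mem_single a)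

lemma inv_mul_cancel (a : L) : M.Pi [M.inv a, a] = M.one := M.Pi_inv [a] (M.mem_single a)

lemma mul_inv_cancel (a : L) : M.Pi [a, M.inv a] = M.one := by
  simpa [M.inv_inv] using M.inv_mul_cancel (M.inv a)

/-- The entry `x` absorbs the identity left by `g g⁻¹`: the axioms give no way to delete a
bare `1` from a word. -/
lemma cancel_mem {u v : List L} {x g : L} (h : u ++ [x, g, M.inv g] ++ v ∈ M.D) :
    u ++ x :: v ∈ M.D := by
  have h₁ : u ++ [x] ++ [g, M.inv g] ++ v ∈ M.D := by simpa using h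
  have h₂ : u ++ [x, M.one] ++ v ∈ M.D := by simpa [M.mul_inv_cancel] using M.contract_mem h₁
  simpa [M.mul_one] using M.contract_mem h₂

lemma Pi_cancel {u v : List L} {x g : L} (h : u ++ [x, g, M.inv g] ++ v ∈ M.D) :
    M.Pi (u ++ [x, g, M.inv g] ++ v) = M.Pi (u ++ x :: v) := by
  have h₁ : u ++ [x] ++ [g, M.inv g] ++ v ∈ M.D := by simpa using h
  have h₂ : u ++ [x, M.one] ++ v ∈ M.D := by simpa [M.mul_inv_cancel] using M.contract_mem h₁
  calc M.Pi (u ++ [x, g, M.inv g] ++ v) = M.Pi (u ++ [x, M.one] ++ v) := by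
        simpa [M.mul_inv_cancel] using M.Pi_contract h₁
    _ = M.Pi (u ++ x :: v) := by simpa [M.mul_one] using M.Pi_contract h₂

lemma eq_inv_of_Pi_pair_eq_one {a b : L} (h : [a, b] ∈ M.D) (e : M.Pi [a, b] = M.one) :
    a = M.inv b := by
  have h₁ : [a, b, M.inv b] ∈ M.D :=
    M.mem_append_left _ [M.inv a] (by simpa [wordInv] using M.append_wordInv_mem h)
  have h₂ : [] ++ [a, b, M.inv b] ++ [] ∈ M.D := by simpa using h₁
  calc a = M.Pi [a, b, M.inv b] := by simpa [M.Pi_single] using (M.Pi_cancel h₂).symm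
    _ = M.inv b := by
      simpa [e, M.one_mul] using M.Pi_contract (u := []) (v := [a, b]) (w := [M.inv b]) h₁

lemma inv_Pi {w : List L} (h : w ∈ M.D) : M.inv (M.Pi w) = M.Pi (M.wordInv w) := by
  have h₁ := M.wordInv_append_mem h
  refine (M.eq_inv_of_Pi_pair_eq_one (M.pair_mem_of_append_mem h₁) ?_).symm
  rw [← M.Pi_append h₁]
  exact M.Pi_inv w h

lemma inv_one : M.inv M.one = M.one := by
  simpa [wordInv] using M.inv_Pi M.nil_mem_D

lemma conj_one (x : L) : M.conj x M.one = x := by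
  have h : [M.one, x] ∈ M.D := M.insert_one_mem (u := []) (M.mem_single x)
  calc M.conj x M.one = M.Pi [M.one, x, M.one] := by rw [conj, M.inv_one]
    _ = x := by
      simpa [M.one_mul] using M.Pi_insert_one (u := [M.one, x]) (v := []) (by simpa using h)

lemma setConj_one (X : Set L) : M.setConj X M.one = X := by
  simp [setConj, M.conj_one]

lemma one_conj (g : L) : M.conj M.one g = M.one := by
  simpa [conj, M.inv_mul_cancel] using M.Pi_insert_one (u := [M.inv g]) (v := [g]) (M.inv_mul_mem g)

lemma conj_inv_append_conj_mem {x g : L} (h : [M.inv g, x, g] ∈ M.D) :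
    [M.inv g, M.inv x, g, M.inv g, x, g] ∈ M.D := by
  simpa [wordInv, M.inv_inv] using M.wordInv_append_mem h

lemma inv_conj {x g : L} (h : [M.inv g, x, g] ∈ M.D) :
    M.inv (M.conj x g) = M.conj (M.inv x) g := by
  simpa [wordInv, M.inv_inv, conj] using M.inv_Pi h

lemma conj_conj_inv {x g : L} (h : [M.inv g, x, g] ∈ M.D) :
    [g, M.conj x g, M.inv g] ∈ M.D ∧ M.conj (M.conj x g) (M.inv g) = x := by
  have h₁ : [g, M.inv g, x, g] ∈ M.D :=
    M.mem_append_right [M.inv g, M.inv x] _ (M.conj_inv_append_conj_mem h)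
  have h₂ : [g] ++ [M.inv g, x, g] ++ [M.inv g] ∈ M.D :=
    M.mem_append_left _ [M.inv x, g, M.inv g]
      (by simpa [wordInv, M.inv_inv] using M.append_wordInv_mem h₁)
  refine ⟨by simpa [conj] using M.contract_mem h₂, ?_⟩
  have h₃ : [g, M.inv g] ++ [x, g, M.inv g] ++ [] ∈ M.D := by simpa using h₂
  calc M.conj (M.conj x g) (M.inv g) = M.Pi ([g] ++ [M.inv g, x, g] ++ [M.inv g]) := by
        simpa [conj, M.inv_inv] using (M.Pi_contract h₂).symm
    _ = M.Pi [g, M.inv g, x] := by simpa using M.Pi_cancel h₃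
    _ = x := by
      simpa [M.mul_inv_cancel, M.one_mul] using
        M.Pi_contract (u := []) (v := [g, M.inv g]) (w := [x])
          (by simpa using M.mem_append_left [g, M.inv g, x] [g] h₁)

lemma inv_mul_cancel_left {s h : L} (hsh : [s, h] ∈ M.D) : M.Pi [M.inv s, M.Pi [s, h]] = h := by
  have h₁ : [M.inv s, s, h] ∈ M.D :=
    M.mem_append_right [M.inv h] _ (by simpa [wordInv] using M.wordInv_append_mem hsh)
  calc M.Pi [M.inv s, M.Pi [s, h]] = M.Pi [M.inv s, s, h] := by
        simpa using (M.Pi_contract (u := [M.inv s]) (w := []) (by simpa using h₁)).symm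
    _ = h := by
      simpa [M.inv_mul_cancel, M.one_mul] using
        M.Pi_contract (u := []) (v := [M.inv s, s]) (w := [h]) (by simpa using h₁)

lemma Pi_pair_conj {s h : L} (hd : [M.inv h, s, h] ∈ M.D) :
    M.Pi [h, M.conj s h] = M.Pi [s, h] := by
  have h₁ : [h, M.inv h, s, h] ∈ M.D :=
    M.mem_append_right [M.inv h, M.inv s] _ (M.conj_inv_append_conj_mem hd)
  have h₂ : [s, h] ∈ M.D := M.mem_append_right [h, M.inv h] _ h₁
  calc M.Pi [h, M.conj s h] = M.Pi [h, M.inv h, s, h] := by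
        simpa [conj] using (M.Pi_contract (u := [h]) (w := []) (by simpa using h₁)).symm
    _ = M.Pi [M.one, s, h] := by
      simpa [M.mul_inv_cancel] using M.Pi_contract (u := []) (v := [h, M.inv h]) (by simpa using h₁)
    _ = M.Pi [s, h] := M.Pi_insert_one (u := []) h₂

lemma conj_conj {x a b : L} (h : [M.inv b, M.inv a, x, a, b] ∈ M.D) :
    [M.inv (M.Pi [a, b]), x, M.Pi [a, b]] ∈ M.D ∧
      M.conj (M.conj x a) b = M.conj x (M.Pi [a, b]) := by
  have hab : [a, b] ∈ M.D := M.mem_append_right [M.inv b, M.inv a, x] _ h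
  have hinv : M.Pi [M.inv b, M.inv a] = M.inv (M.Pi [a, b]) := by
    simpa [wordInv] using (M.inv_Pi hab).symm
  have h₁ : [] ++ [M.inv b, M.inv a] ++ [x, a, b] ∈ M.D := by simpa using h
  have h₂ : [M.inv (M.Pi [a, b]), x] ++ [a, b] ++ [] ∈ M.D := by
    simpa [hinv] using M.contract_mem h₁
  refine ⟨by simpa using M.contract_mem h₂, ?_⟩
  calc M.conj (M.conj x a) b = M.Pi [M.inv b, M.inv a, x, a, b] := by
        simpa [conj] using
          (M.Pi_contract (u := [M.inv b]) (v := [M.inv a, x, a]) (w := [b]) (by simpa using h)).symm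
    _ = M.Pi [M.inv (M.Pi [a, b]), x, a, b] := by simpa [hinv] using M.Pi_contract h₁
    _ = M.conj x (M.Pi [a, b]) := by simpa [conj] using M.Pi_contract h₂

lemma conj_Pi_pair {x y k : L} (h : [M.inv k, x, k, M.inv k, y, k] ∈ M.D) :
    [M.inv k, M.Pi [x, y], k] ∈ M.D ∧
      M.conj (M.Pi [x, y]) k = M.Pi [M.conj x k, M.conj y k] := by
  have h₀ : [M.inv k] ++ [x, k, M.inv k] ++ [y, k] ∈ M.D := by simpa using h
  have h₂ : [M.inv k] ++ [x, y] ++ [k] ∈ M.D := by simpa using M.cancel_mem h₀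
  refine ⟨by simpa using M.contract_mem h₂, ?_⟩
  calc M.conj (M.Pi [x, y]) k = M.Pi [M.inv k, x, y, k] := by
        simpa [conj] using (M.Pi_contract h₂).symm
    _ = M.Pi [M.inv k, x, k, M.inv k, y, k] := by simpa using (M.Pi_cancel h₀).symm
    _ = M.Pi [M.conj x k, M.conj y k] := by
      simpa [conj] using M.Pi_append (u := [M.inv k, x, k]) (v := [M.inv k, y, k]) h

end Algebra

variable {M : PartialGroupOn L} {Δ : Set (Set L)} {S H P Q X Y Z : Set L} {w : List L}
  {a b g g' k s x y : L}

namespace IsSubgroup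

lemma word_mem (hS : M.IsSubgroup S) (hw : ∀ z ∈ w, z ∈ S) : w ∈ M.D := hS.2 w hw

lemma Pi_mem (hS : M.IsSubgroup S) (hw : ∀ z ∈ w, z ∈ S) : M.Pi w ∈ S :=
  hS.1.2.2 w hw (hS.word_mem hw)

lemma inv_mem (hS : M.IsSubgroup S) (hx : x ∈ S) : M.inv x ∈ S := hS.1.2.1 x hx

lemma one_mem (hS : M.IsSubgroup S) : M.one ∈ S := hS.Pi_mem (w := []) (by simp)

lemma Pi_pair_mem (hS : M.IsSubgroup S) (ha : a ∈ S) (hb : b ∈ S) : M.Pi [a, b] ∈ S :=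
  hS.Pi_mem (by simp [ha, hb])

lemma conj_mem_D (hS : M.IsSubgroup S) (hx : x ∈ S) (hs : s ∈ S) : [M.inv s, x, s] ∈ M.D :=
  hS.word_mem (by simp [hx, hs, hS.inv_mem hs])

lemma conj_mem (hS : M.IsSubgroup S) (hx : x ∈ S) (hs : s ∈ S) : M.conj x s ∈ S :=
  hS.Pi_mem (by simp [hx, hs, hS.inv_mem hs])

lemma setConjDef (hS : M.IsSubgroup S) (hXS : X ⊆ S) (hs : s ∈ S) : M.setConjDef X s :=
  fun _ hx => hS.conj_mem_D (hXS hx) hs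

lemma setConj_subset (hS : M.IsSubgroup S) (hXS : X ⊆ S) (hs : s ∈ S) :
    M.setConj X s ⊆ S := by
  rintro _ ⟨x, hx, rfl⟩
  exact hS.conj_mem (hXS hx) hs

lemma conj_conj (hS : M.IsSubgroup S) (hx : x ∈ S) (ha : a ∈ S) (hb : b ∈ S) :
    M.conj (M.conj x a) b = M.conj x (M.Pi [a, b]) :=
  (M.conj_conj (hS.word_mem (by simp [hx, ha, hb, hS.inv_mem ha, hS.inv_mem hb]))).2

lemma setConj_setConj (hS : M.IsSubgroup S) (hXS : X ⊆ S) (ha : a ∈ S) (hb : b ∈ S) :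
    M.setConj (M.setConj X a) b = M.setConj X (M.Pi [a, b]) := by
  ext z
  constructor
  · rintro ⟨_, ⟨x, hx, rfl⟩, rfl⟩
    exact ⟨x, hx, hS.conj_conj (hXS hx) ha hb⟩
  · rintro ⟨x, hx, rfl⟩
    exact ⟨M.conj x a, ⟨x, hx, rfl⟩, (hS.conj_conj (hXS hx) ha hb).symm⟩

lemma conj_Pi_pair (hS : M.IsSubgroup S) (hx : x ∈ S) (hy : y ∈ S) (hs : s ∈ S) :
    M.conj (M.Pi [x, y]) s = M.Pi [M.conj x s, M.conj y s] :=
  (M.conj_Pi_pair (hS.word_mem (by simp [hx, hy, hs, hS.inv_mem hs]))).2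

lemma conj_Pi (hS : M.IsSubgroup S) (hs : s ∈ S) :
    ∀ {w : List L}, (∀ z ∈ w, z ∈ S) → M.conj (M.Pi w) s = M.Pi (w.map (M.conj · s))
  | [], _ => by simp [M.one_conj]
  | x :: w, hw => by
    simp only [List.forall_mem_cons] at hw
    have hmap : ∀ z ∈ M.conj x s :: w.map (M.conj · s), z ∈ S := by
      simp only [List.forall_mem_cons, List.forall_mem_map]
      exact ⟨hS.conj_mem hw.1 hs, fun z hz => hS.conj_mem (hw.2 z hz) hs⟩
    rw [List.map_cons, M.Pi_cons (hS.word_mem hmap), ← hS.conj_Pi hs hw.2,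
      M.Pi_cons (hS.word_mem (List.forall_mem_cons.2 hw)), hS.conj_Pi_pair hw.1 (hS.Pi_mem hw.2) hs]

lemma isSubgroup_setConj (hS : M.IsSubgroup S) (hX : M.IsSubgroup X) (hXS : X ⊆ S)
    (hs : s ∈ S) :
    M.IsSubgroup (M.setConj X s) := by
  have hsub := hS.setConj_subset hXS hs
  refine ⟨⟨?_, ?_, fun w hw _ => ?_⟩, fun w hw => hS.word_mem fun z hz => hsub (hw z hz)⟩
  · obtain ⟨x, hx⟩ := hX.1.1
    exact ⟨_, x, hx, rfl⟩
  · rintro _ ⟨x, hx, rfl⟩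
    exact ⟨M.inv x, hX.inv_mem hx, M.inv_conj (hS.conj_mem_D (hXS hx) hs)⟩
  · obtain ⟨u, rfl⟩ : w ∈ Set.range (List.map fun x : X => M.conj x s) := by
      rw [Set.range_list_map]
      intro z hz
      obtain ⟨x, hx, rfl⟩ := hw z hz
      exact ⟨⟨x, hx⟩, rfl⟩
    have hu : ∀ z ∈ u.map Subtype.val, z ∈ X := by
      simp only [List.forall_mem_map]
      exact fun z _ => z.2
    refine ⟨M.Pi (u.map Subtype.val), hX.Pi_mem hu, ?_⟩
    rw [hS.conj_Pi hs fun z hz => hXS (hu z hz), List.map_map]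
    rfl

lemma setConj_self (hX : M.IsSubgroup X) (hx : x ∈ X) : M.setConj X x = X := by
  ext z
  constructor
  · rintro ⟨y, hy, rfl⟩
    exact hX.conj_mem hy hx
  · intro hz
    have hd := hX.conj_mem_D hz (hX.inv_mem hx)
    refine ⟨M.conj z (M.inv x), hX.conj_mem hz (hX.inv_mem hx), ?_⟩
    simpa [M.inv_inv] using (M.conj_conj_inv hd).2.symm

lemma inv_mem_Sg (hS : M.IsSubgroup S) {g : L} (hx : x ∈ M.Sg S g) : M.inv x ∈ M.Sg S g := by
  obtain ⟨hxS, hd, hc⟩ := hx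
  refine ⟨hS.inv_mem hxS, ?_, M.inv_conj hd ▸ hS.inv_mem hc⟩
  exact M.mem_append_left _ [M.inv g, x, g] (M.conj_inv_append_conj_mem hd)

end IsSubgroup

structure IsObjectiveOver (M : PartialGroupOn L) (Δ : Set (Set L)) (S : Set L) : Prop where
  objective : M.Objective Δ
  top_mem : S ∈ Δ
  subset_top : ∀ X ∈ Δ, X ⊆ S

structure ConjEdge (M : PartialGroupOn L) (Δ : Set (Set L)) (X : Set L) (g : L) (Y : Set L) :
    Prop where
  mem_left : X ∈ Δ
  conjDef : M.setConjDef X g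
  setConj_eq : M.setConj X g = Y
  mem_right : Y ∈ Δ

lemma IsLocality.isObjectiveOver {p : ℕ} (h : M.IsLocality p Δ S) : M.IsObjectiveOver Δ S :=
  ⟨h.2.2.2.2.1, h.2.2.1, h.2.2.2.1⟩

lemma mem_of_viaChain (h : M.viaChain Δ w X) : X ∈ Δ := by
  cases w with
  | nil => exact h
  | cons _ _ => exact h.1

namespace ConjEdge

lemma to_setConj (e : M.ConjEdge Δ X g Y) : M.ConjEdge Δ X g (M.setConj X g) := by
  rw [e.setConj_eq]
  exact e

lemma viaChain_cons (e : M.ConjEdge Δ X g Y) (hw : M.viaChain Δ w Y) : M.viaChain Δ (g :: w) X :=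
  ⟨e.mem_left, e.conjDef, e.setConj_eq ▸ hw⟩

lemma symm (e : M.ConjEdge Δ X g Y) : M.ConjEdge Δ Y (M.inv g) X := by
  obtain ⟨hX, hdef, rfl, hY⟩ := e
  refine ⟨hY, ?_, ?_, hX⟩
  · rintro _ ⟨x, hx, rfl⟩
    simpa [M.inv_inv] using (M.conj_conj_inv (hdef x hx)).1
  · ext z
    constructor
    · rintro ⟨_, ⟨x, hx, rfl⟩, rfl⟩
      rwa [(M.conj_conj_inv (hdef x hx)).2]
    · exact fun hz => ⟨M.conj z g, ⟨z, hz, rfl⟩, (M.conj_conj_inv (hdef z hz)).2.symm⟩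

end ConjEdge

namespace IsObjectiveOver

variable (hΔ : M.IsObjectiveOver Δ S)
include hΔ

lemma isSubgroup (hX : X ∈ Δ) : M.IsSubgroup X := hΔ.objective.1 X hX

lemma isSubgroup_top : M.IsSubgroup S := hΔ.isSubgroup hΔ.top_mem

lemma mem_D_of_viaChain (h : M.viaChain Δ w X) : w ∈ M.D := hΔ.objective.2.1 ▸ ⟨X, h⟩

lemma mem_of_subset (hX : X ∈ Δ) (hZ : M.IsSubgroup Z) (hXZ : X ⊆ Z) (hZS : Z ⊆ S) :
    Z ∈ Δ := by
  have hXS := hΔ.subset_top X hX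
  refine hΔ.objective.2.2 X hX S hΔ.top_mem M.one
    (hΔ.isSubgroup_top.setConjDef hXS hΔ.isSubgroup_top.one_mem) ?_ ?_ Z hZ ?_ hZS <;>
    rw [M.setConj_one]
  exacts [hΔ.isSubgroup hX, hXS, hXZ]

lemma setConj_mem (hX : X ∈ Δ) (hs : s ∈ S) : M.setConj X s ∈ Δ := by
  have hS := hΔ.isSubgroup_top
  have hXS := hΔ.subset_top X hX
  exact hΔ.objective.2.2 X hX S hΔ.top_mem s (hS.setConjDef hXS hs)
    (hS.isSubgroup_setConj (hΔ.isSubgroup hX) hXS hs) (hS.setConj_subset hXS hs) _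
    (hS.isSubgroup_setConj (hΔ.isSubgroup hX) hXS hs) subset_rfl (hS.setConj_subset hXS hs)

lemma conjEdge_of_mem_top (hX : X ∈ Δ) (hs : s ∈ S) : M.ConjEdge Δ X s (M.setConj X s) :=
  ⟨hX, hΔ.isSubgroup_top.setConjDef (hΔ.subset_top X hX) hs, rfl, hΔ.setConj_mem hX hs⟩

lemma conjEdge_self (hX : X ∈ Δ) (hx : x ∈ X) : M.ConjEdge Δ X x X :=
  ⟨hX, (hΔ.isSubgroup hX).setConjDef subset_rfl hx, (hΔ.isSubgroup hX).setConj_self hx, hX⟩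

/-- Composition of edges: `x ↦ (x^g)^{g'}` is conjugation by `gg'`, because the word
`(g'⁻¹, g⁻¹, x, g, g')` lies in `D` via the chain `Z, Y, X, X, Y, Z`. -/
lemma conjEdge_trans (e₁ : M.ConjEdge Δ X g Y) (e₂ : M.ConjEdge Δ Y g' Z) :
    M.ConjEdge Δ X (M.Pi [g, g']) Z := by
  have key : ∀ x ∈ X, [M.inv (M.Pi [g, g']), x, M.Pi [g, g']] ∈ M.D ∧
      M.conj (M.conj x g) g' = M.conj x (M.Pi [g, g']) := fun x hx =>
    M.conj_conj <| hΔ.mem_D_of_viaChain <| e₂.symm.viaChain_cons <| e₁.symm.viaChain_cons <|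
      (hΔ.conjEdge_self e₁.mem_left hx).viaChain_cons <| e₁.viaChain_cons <|
        e₂.viaChain_cons e₂.mem_right
  refine ⟨e₁.mem_left, fun x hx => (key x hx).1, ?_, e₂.mem_right⟩
  rw [← e₂.setConj_eq, ← e₁.setConj_eq]
  ext z
  constructor
  · rintro ⟨x, hx, rfl⟩
    exact ⟨M.conj x g, ⟨x, hx, rfl⟩, ((key x hx).2).symm⟩
  · rintro ⟨_, ⟨x, hx, rfl⟩, rfl⟩
    exact ⟨x, hx, (key x hx).2⟩

end IsObjectiveOver

def HasObjectConjugates (M : PartialGroupOn L) (Δ : Set (Set L)) (H X : Set L) : Prop :=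
  X ∈ Δ ∧ ∀ h ∈ H, M.ConjEdge Δ X h (M.setConj X h)

def SH (M : PartialGroupOn L) (S H : Set L) : Set L := {x | x ∈ S ∧ ∀ h ∈ H, x ∈ M.Sg S h}

lemma IsSubgroup.inv_mem_SH (hS : M.IsSubgroup S) (hx : x ∈ M.SH S H) : M.inv x ∈ M.SH S H :=
  ⟨hS.inv_mem hx.1, fun h hh => hS.inv_mem_Sg (hx.2 h hh)⟩

namespace HasObjectConjugates

lemma conjEdge (hX : M.HasObjectConjugates Δ H X) {h : L} (hh : h ∈ H) :
    M.ConjEdge Δ X h (M.setConj X h) := hX.2 h hh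

variable (hΔ : M.IsObjectiveOver Δ S)
include hΔ

lemma subset_SH (hX : M.HasObjectConjugates Δ H X) : X ⊆ M.SH S H := fun x hx =>
  have hxS := hΔ.subset_top X hX.1 hx
  ⟨hxS, fun _ hh => ⟨hxS, (hX.conjEdge hh).conjDef x hx,
    hΔ.subset_top _ (hX.conjEdge hh).mem_right ⟨x, hx, rfl⟩⟩⟩

lemma conjEdge_setConj (hH : M.IsSubgroup H) (hX : M.HasObjectConjugates Δ H X) {h : L}
    (hh : h ∈ H) (hk : k ∈ H) :
    M.ConjEdge Δ (M.setConj X h) k (M.setConj X (M.Pi [h, k])) := by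
  have e := hΔ.conjEdge_trans (hX.conjEdge hh).symm (hX.conjEdge (hH.Pi_pair_mem hh hk))
  rwa [M.inv_mul_cancel_left (hH.word_mem (by simp [hh, hk]))] at e

lemma setConj_of_mem (hH : M.IsSubgroup H) (hX : M.HasObjectConjugates Δ H X) {h : L}
    (hh : h ∈ H) : M.HasObjectConjugates Δ H (M.setConj X h) :=
  ⟨(hX.conjEdge hh).mem_right, fun _ hk => (hX.conjEdge_setConj hΔ hH hh hk).to_setConj⟩

/-- The edge `X^s → (X^s)^h` is the composite `X^s → X → X^h → (X^h)^{s^h}`,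
whose label `s⁻¹ · h · s^h` is `h`. -/
lemma setConj_of_mem_SH (hX : M.HasObjectConjugates Δ H X) (hs : s ∈ M.SH S H) :
    M.HasObjectConjugates Δ H (M.setConj X s) := by
  refine ⟨hΔ.setConj_mem hX.1 hs.1, fun h hh => ?_⟩
  obtain ⟨-, hd, hc⟩ := hs.2 h hh
  have e := hΔ.conjEdge_trans (hX.conjEdge hh)
    (hΔ.conjEdge_of_mem_top (hX.conjEdge hh).mem_right hc)
  rw [M.Pi_pair_conj hd] at e
  have e' := hΔ.conjEdge_trans (hΔ.conjEdge_of_mem_top hX.1 hs.1).symm e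
  rw [M.inv_mul_cancel_left (M.mem_append_right [M.inv h] _ hd)] at e'
  exact e'.to_setConj

lemma setConj_Pi (hX : M.HasObjectConjugates Δ H X) {u : List L}
    (hu : ∀ x ∈ u, x ∈ M.SH S H) :
    M.HasObjectConjugates Δ H (M.setConj X (M.Pi u)) := by
  induction u generalizing X with
  | nil => simpa [M.setConj_one] using hX
  | cons s t ih =>
    simp only [List.forall_mem_cons] at hu
    have hS := hΔ.isSubgroup_top
    have htS : ∀ z ∈ t, z ∈ S := fun z hz => (hu.2 z hz).1
    rw [M.Pi_cons (hS.word_mem (List.forall_mem_cons.2 ⟨hu.1.1, htS⟩)),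
      ← hS.setConj_setConj (hΔ.subset_top X hX.1) hu.1.1 (hS.Pi_mem htS)]
    exact ih (hX.setConj_of_mem_SH hΔ hu.1) hu.2

lemma viaChain_conj (hX : M.HasObjectConjugates Δ H X)
    (hXx : M.HasObjectConjugates Δ H (M.setConj X x)) (hx : x ∈ S) (hk : k ∈ H)
    (hw : M.viaChain Δ w (M.setConj (M.setConj X x) k)) :
    M.viaChain Δ (M.inv k :: x :: k :: w) (M.setConj X k) :=
  (hX.conjEdge hk).symm.viaChain_cons <|
    (hΔ.conjEdge_of_mem_top hX.1 hx).viaChain_cons <| (hXx.conjEdge hk).viaChain_cons hw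

lemma conj_Pi_mem_D (hX : M.HasObjectConjugates Δ H X) {u : List L}
    (hu : ∀ x ∈ u, x ∈ M.SH S H) (hk : k ∈ H) : [M.inv k, M.Pi u, k] ∈ M.D :=
  have hXu := hX.setConj_Pi hΔ hu
  hΔ.mem_D_of_viaChain <| hX.viaChain_conj hΔ hXu
    (hΔ.isSubgroup_top.Pi_mem fun x hx => (hu x hx).1) hk (w := []) (hXu.conjEdge hk).mem_right

/-- For `x ∈ S_H`, the word `(k⁻¹, x, k, k⁻¹, Π t, k)` lies in `D` via the chain starting at
`(X^{x⁻¹})^k`, which makes conjugation by `k` multiplicative on such products. -/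
lemma conj_Pi (hX : M.HasObjectConjugates Δ H X) (hk : k ∈ H) {u : List L}
    (hu : ∀ x ∈ u, x ∈ M.SH S H) : M.conj (M.Pi u) k = M.Pi (u.map (M.conj · k)) := by
  have hS := hΔ.isSubgroup_top
  induction u with
  | nil => simp [M.one_conj]
  | cons x t ih =>
    simp only [List.forall_mem_cons] at hu
    have htS : ∀ z ∈ t, z ∈ S := fun z hz => (hu.2 z hz).1
    have hx' := hX.setConj_of_mem_SH hΔ (hS.inv_mem_SH hu.1)
    have hback : M.setConj (M.setConj X (M.inv x)) x = X := by
      simpa [M.inv_inv] using (hΔ.conjEdge_of_mem_top hX.1 (hS.inv_mem hu.1.1)).symm.setConj_eq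
    have hXt := hX.setConj_Pi hΔ hu.2
    have hw : M.viaChain Δ [M.inv k, M.Pi t, k] (M.setConj X k) :=
      hX.viaChain_conj hΔ hXt (hS.Pi_mem htS) hk (w := []) (hXt.conjEdge hk).mem_right
    have hchain := hx'.viaChain_conj hΔ (by rwa [hback]) hu.1.1 hk (by rwa [hback])
    have hmap : ∀ z ∈ M.conj x k :: t.map (M.conj · k), z ∈ S := by
      simp only [List.forall_mem_cons, List.forall_mem_map]
      exact ⟨(hu.1.2 k hk).2.2, fun z hz => (hu.2 z hz |>.2 k hk).2.2⟩
    rw [List.map_cons, M.Pi_cons (hS.word_mem hmap), ← ih hu.2,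
      M.Pi_cons (hS.word_mem (List.forall_mem_cons.2 ⟨hu.1.1, htS⟩)),
      (M.conj_Pi_pair (hΔ.mem_D_of_viaChain hchain)).2]

end HasObjectConjugates

def wordProducts (M : PartialGroupOn L) (X : Set L) : Set L :=
  {z | ∃ u : List L, (∀ x ∈ u, x ∈ X) ∧ M.Pi u = z}

lemma subset_wordProducts : X ⊆ M.wordProducts X := fun x hx =>
  ⟨[x], by simpa using hx, M.Pi_single x⟩

lemma subset_normalizer_of_setConj_subset (hH : ∀ h ∈ H, M.inv h ∈ H) (hdef : ∀ h ∈ H, M.setConjDef Q h)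
    (hsub : ∀ h ∈ H, M.setConj Q h ⊆ Q) : H ⊆ M.normalizer Q := by
  refine fun h hh => ⟨hdef h hh, (hsub h hh).antisymm fun z hz => ?_⟩
  refine ⟨M.conj z (M.inv h), hsub _ (hH h hh) ⟨z, hz, rfl⟩, ?_⟩
  simpa [M.inv_inv] using (M.conj_conj_inv (hdef _ (hH h hh) z hz)).2.symm

namespace IsSubgroup

lemma wordProducts_subset (hS : M.IsSubgroup S) (hXS : X ⊆ S) : M.wordProducts X ⊆ S := by
  rintro _ ⟨u, hu, rfl⟩
  exact hS.Pi_mem fun x hx => hXS (hu x hx)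

lemma Pi_mem_wordProducts (hS : M.IsSubgroup S) (hXS : X ⊆ S) :
    ∀ {w : List L}, (∀ z ∈ w, z ∈ M.wordProducts X) → M.Pi w ∈ M.wordProducts X
  | [], _ => ⟨[], by simp, rfl⟩
  | z :: w, hw => by
    simp only [List.forall_mem_cons] at hw
    obtain ⟨⟨u, hu, rfl⟩, hw⟩ := hw
    obtain ⟨v, hv, hvw⟩ := hS.Pi_mem_wordProducts hXS hw
    have huv : ∀ x ∈ u ++ v, x ∈ X := fun x hx => (List.mem_append.1 hx).elim (hu x) (hv x)
    have hwS : ∀ y ∈ w, y ∈ S := fun y hy => hS.wordProducts_subset hXS (hw y hy)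
    refine ⟨u ++ v, huv, ?_⟩
    have hzS := hS.wordProducts_subset hXS ⟨u, hu, rfl⟩
    rw [M.Pi_append (hS.word_mem fun x hx => hXS (huv x hx)), hvw,
      M.Pi_cons (hS.word_mem (List.forall_mem_cons.2 ⟨hzS, hwS⟩))]

lemma isSubgroup_wordProducts (hS : M.IsSubgroup S) (hXS : X ⊆ S)
    (hX : ∀ x ∈ X, M.inv x ∈ X) : M.IsSubgroup (M.wordProducts X) := by
  refine ⟨⟨⟨_, [], by simp, rfl⟩, ?_, fun w hw _ => hS.Pi_mem_wordProducts hXS hw⟩,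
    fun w hw => hS.word_mem fun z hz => hS.wordProducts_subset hXS (hw z hz)⟩
  rintro _ ⟨u, hu, rfl⟩
  refine ⟨M.wordInv u, ?_, (M.inv_Pi (hS.word_mem fun x hx => hXS (hu x hx))).symm⟩
  simpa [wordInv] using fun x hx => hX x (hu x hx)

end IsSubgroup

lemma conjEdge_of_viaChain_flatMap :
    ∀ {q : List L} {X : Set L}, M.viaChain Δ (q.flatMap fun h => [h, M.inv h]) X →
      ∀ h ∈ q, M.ConjEdge Δ X h (M.setConj X h)
  | [], _, _ => by simp
  | a :: q, X, ⟨hX, hdef, hXa, _, hc⟩ => by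
    have e : M.ConjEdge Δ X a (M.setConj X a) := ⟨hX, hdef, rfl, hXa⟩
    rw [e.symm.setConj_eq] at hc
    simp only [List.mem_cons, forall_eq_or_imp]
    exact ⟨e, conjEdge_of_viaChain_flatMap hc⟩

lemma IsObjectiveOver.exists_hasObjectConjugates (hΔ : M.IsObjectiveOver Δ S)
    (hH : M.IsSubgroup H) (hfin : H.Finite) : ∃ X, M.HasObjectConjugates Δ H X := by
  obtain ⟨s, rfl⟩ := hfin.exists_finset_coe
  have hw : (s.toList.flatMap fun h => [h, M.inv h]) ∈ M.D :=
    hH.word_mem fun z hz => by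
      obtain ⟨h, hh, hz⟩ := List.mem_flatMap.1 hz
      rw [Finset.mem_toList, ← Finset.mem_coe] at hh
      rcases List.mem_pair.1 hz with rfl | rfl
      exacts [hh, hH.inv_mem hh]
  rw [hΔ.objective.2.1] at hw
  obtain ⟨X, hX⟩ := hw
  exact ⟨X, mem_of_viaChain hX, fun h hh =>
    conjEdge_of_viaChain_flatMap hX h (by simpa using hh)⟩

namespace HasObjectConjugates

variable (hΔ : M.IsObjectiveOver Δ S) (hH : M.IsSubgroup H) (hP : M.HasObjectConjugates Δ H P)
include hΔ hH hP

lemma iUnion_setConj_subset_SH : ⋃ h ∈ H, M.setConj P h ⊆ M.SH S H :=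
  Set.iUnion₂_subset fun _ hh => (hP.setConj_of_mem hΔ hH hh).subset_SH hΔ

lemma isSubgroup_wordProducts_iUnion_setConj :
    M.IsSubgroup (M.wordProducts (⋃ h ∈ H, M.setConj P h)) := by
  refine hΔ.isSubgroup_top.isSubgroup_wordProducts
    (fun x hx => (hP.iUnion_setConj_subset_SH hΔ hH hx).1) fun x hx => ?_
  obtain ⟨h, hh, hx⟩ := Set.mem_iUnion₂.1 hx
  exact Set.mem_iUnion₂.2 ⟨h, hh, (hΔ.isSubgroup (hP.conjEdge hh).mem_right).inv_mem hx⟩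

lemma wordProducts_iUnion_setConj_mem : M.wordProducts (⋃ h ∈ H, M.setConj P h) ∈ Δ := by
  refine hΔ.mem_of_subset hP.1 (hP.isSubgroup_wordProducts_iUnion_setConj hΔ hH) ?_
    (hΔ.isSubgroup_top.wordProducts_subset fun x hx => (hP.iUnion_setConj_subset_SH hΔ hH hx).1)
  exact (M.setConj_one P).symm.subset.trans <|
    (Set.subset_biUnion_of_mem (u := M.setConj P) hH.one_mem).trans subset_wordProducts

lemma subset_normalizer_wordProducts_iUnion_setConj :
    H ⊆ M.normalizer (M.wordProducts (⋃ h ∈ H, M.setConj P h)) := by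
  have hSH := hP.iUnion_setConj_subset_SH hΔ hH
  refine subset_normalizer_of_setConj_subset (fun _ => hH.inv_mem) ?_ ?_
  · rintro k hk _ ⟨u, hu, rfl⟩
    exact hP.conj_Pi_mem_D hΔ (fun x hx => hSH (hu x hx)) hk
  · rintro k hk _ ⟨_, ⟨u, hu, rfl⟩, rfl⟩
    rw [hP.conj_Pi hΔ hk fun x hx => hSH (hu x hx)]
    refine ⟨_, ?_, rfl⟩
    simp only [List.forall_mem_map]
    intro x hx
    obtain ⟨h, hh, hx⟩ := Set.mem_iUnion₂.1 (hu x hx)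
    refine Set.mem_iUnion₂.2 ⟨M.Pi [h, k], hH.Pi_pair_mem hh hk, ?_⟩
    rw [← (hP.conjEdge_setConj hΔ hH hh hk).setConj_eq]
    exact ⟨x, hx, rfl⟩

end HasObjectConjugates

end PartialGroupOn

theorem subgroup_le_normalizer_of_object (M : PartialGroupOn L) (p : ℕ)
    (Δ : Set (Set L)) (S : Set L) (hloc : M.IsLocality p Δ S) :
    ∀ H : Set L, M.IsSubgroup H → ∃ P ∈ Δ, H ⊆ M.normalizer P := by
  intro H hH
  have hΔ := hloc.isObjectiveOver
  have : Finite L := hloc.2.1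
  obtain ⟨P, hP⟩ := hΔ.exists_hasObjectConjugates hH H.toFinite
  exact ⟨_, hP.wordProducts_iUnion_setConj_mem hΔ hH,
    hP.subset_normalizer_wordProducts_iUnion_setConj hΔ hH⟩
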